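/- arXiv:2002.04183 — 7 statements merged into one kernel-verified Lean document; each statement's English description precedes it below -/
import Mathlib

section
/- Let H be a finite group, k a field of characteristic r, and V a kH-module. If the largest normal subgroup of H of order coprime to r equals the smallest normal subgroup A of H with H/A an r-group, then the following are equivalent: (i) V^H ≠ 0; (ii) the trivial module occurs as a composition factor of V as an H-module; (iii) V^A ≠ 0; (iv) (V*)^H ≠ 0. -/
open Pointwise


/-- If a finite `r`-group `G` acts `k`-linearly on `V` (char k = r) stabilizing a nonzero
subspace `U`, then it has a nonzero fixed vector in `U`. -/
lemma pgroup_fixed {r : ℕ} [Fact r.Prime] {k : Type} [Field k] [CharP k r]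
    {G : Type} [Group G] [Finite G] {V : Type} [AddCommGroup V] [Module k V]
    (σ : Representation k G V) (hG : IsPGroup r G)
    (U : Submodule k V) (hstab : ∀ g : G, ∀ v ∈ U, σ g v ∈ U)
    (hU : U ≠ ⊥) : ∃ v ∈ U, v ≠ 0 ∧ ∀ g : G, σ g v = v := by
  classical
  haveI : NeZero r := ⟨(Fact.out : r.Prime).pos.ne'⟩
  letI := Fintype.ofFinite G
  obtain ⟨u, huU, hu0⟩ := Submodule.exists_mem_ne_zero_of_ne_bot hU
  have hr : ∀ x : V, r • x = 0 := fun x => by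
    rw [← Nat.cast_smul_eq_nsmul k, CharP.cast_eq_zero, zero_smul]
  have h_mod : ∀ (c : ℕ) (x : V), (c % r) • x = c • x := fun c x => by
    conv_rhs => rw [← Nat.mod_add_div c r]
    rw [add_nsmul, mul_comm, mul_nsmul, hr, add_zero]
  let φhom : (G → ZMod r) →+ V :=
    { toFun := fun c => ∑ g : G, (c g).val • σ g u
      map_zero' := by simp
      map_add' := fun c c' => by
        rw [← Finset.sum_add_distrib]
        refine Finset.sum_congr rfl fun g _ => ?_
        rw [Pi.add_apply, ZMod.val_add, h_mod, add_nsmul]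
      }
  set M : AddSubgroup V := φhom.range with hM
  have hMfin : Finite M := by
    have : Finite (Set.range φhom) := Set.finite_range φhom
    exact this
  have huM : u ∈ M := by
    refine ⟨(Pi.single (1 : G) (1 : ZMod r) : G → ZMod r), ?_⟩
    show ∑ g : G, ((Pi.single (1 : G) (1 : ZMod r) : G → ZMod r) g).val • σ g u = u
    rw [Finset.sum_eq_single (1 : G)]
    · simp [ZMod.val_one, (Fact.out : r.Prime).one_lt]
    · intro g _ hg
      simp [Pi.single_eq_of_ne hg]
    · simp
  have hMstab : ∀ h : G, ∀ x ∈ M, σ h x ∈ M := by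
    rintro h x ⟨c, rfl⟩
    refine ⟨fun g => c (h⁻¹ * g), ?_⟩
    show ∑ g : G, (c (h⁻¹ * g)).val • σ g u = σ h (∑ g : G, (c g).val • σ g u)
    rw [map_sum]
    refine (Fintype.sum_equiv (Equiv.mulLeft h) _ _ fun g => ?_).symm
    simp only [Equiv.coe_mulLeft, inv_mul_cancel_left]
    rw [map_nsmul]
    congr 1
    rw [← Module.End.mul_apply, ← map_mul]
  have hMU : ∀ x ∈ M, x ∈ U := by
    rintro x ⟨c, rfl⟩
    exact Submodule.sum_mem U fun g _ => nsmul_mem (hstab g u huU) _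
  letI : MulAction G M :=
    { smul := fun g x => ⟨σ g x.1, hMstab g x.1 x.2⟩
      one_smul := fun x => Subtype.ext (by show σ 1 x.1 = x.1; simp)
      mul_smul := fun g g' x => Subtype.ext (by
        show σ (g * g') x.1 = σ g (σ g' x.1)
        rw [map_mul]; rfl) }
  have hsmul_def : ∀ (g : G) (x : M), ((g • x : M) : V) = σ g x.1 := fun g x => rfl
  -- card M is divisible by r
  have hdvd : Nat.card M ∣ r ^ Nat.card G := by
    have h1 : Nat.card M ∣ Nat.card (G → ZMod r) :=
      AddSubgroup.card_dvd_of_surjective φhom.rangeRestrict φhom.rangeRestrict_surjective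
    rwa [Nat.card_fun, Nat.card_zmod] at h1
  have hMnontriv : Nontrivial M :=
    ⟨⟨u, huM⟩, ⟨0, M.zero_mem⟩, by simp [hu0]⟩
  have hrM : r ∣ Nat.card M := by
    obtain ⟨t, _, hteq⟩ := (Nat.dvd_prime_pow (Fact.out : r.Prime)).mp hdvd
    have ht0 : t ≠ 0 := by
      rintro rfl
      rw [pow_zero] at hteq
      exact (Finite.one_lt_card (α := M)).ne' hteq
    rw [hteq]
    exact dvd_pow_self r ht0
  have hmod := hG.card_modEq_card_fixedPoints M
  have hrF : r ∣ Nat.card (MulAction.fixedPoints G M) :=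
    (Nat.modEq_zero_iff_dvd).mp (hmod.symm.trans ((Nat.modEq_zero_iff_dvd).mpr hrM))
  have h0F : (0 : M) ∈ MulAction.fixedPoints G M := fun g => Subtype.ext (by
    show σ g (0 : V) = 0; simp)
  haveI : Finite (MulAction.fixedPoints G M) := Subtype.finite
  have hFpos : 0 < Nat.card (MulAction.fixedPoints G M) :=
    Nat.card_pos_iff.mpr ⟨⟨⟨0, h0F⟩⟩, inferInstance⟩
  have hFnontriv : Nontrivial (MulAction.fixedPoints G M) := by
    rw [← Finite.one_lt_card_iff_nontrivial]
    rcases hrF with ⟨s, hs⟩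
    have hs1 : s ≠ 0 := by rintro rfl; rw [hs] at hFpos; simp at hFpos
    rw [hs]
    exact lt_of_lt_of_le (Fact.out : r.Prime).one_lt
      (Nat.le_mul_of_pos_right _ (Nat.pos_of_ne_zero hs1))
  obtain ⟨x, hx⟩ := exists_ne (⟨(0 : M), h0F⟩ : MulAction.fixedPoints G M)
  refine ⟨((x : M) : V), hMU _ (x : M).2, ?_, ?_⟩
  · intro h0
    exact hx (Subtype.ext (Subtype.ext h0))
  · intro g
    have := x.2 g
    exact congrArg Subtype.val this

lemma ascent {r : ℕ} [Fact r.Prime] {k : Type} [Field k] [CharP k r]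
    {H : Type} [Group H] [Finite H] {V : Type} [AddCommGroup V] [Module k V]
    (ρ : Representation k H V) (A : Subgroup H) [A.Normal]
    (hA3 : ∃ m : ℕ, A.index = r ^ m)
    (h : Representation.invariants (ρ.comp A.subtype) ≠ ⊥) :
    Representation.invariants ρ ≠ ⊥ := by
  classical
  obtain ⟨P⟩ := (Sylow.nonempty : Nonempty (Sylow r H))
  set U := Representation.invariants (ρ.comp A.subtype) with hUdef
  have hUmem : ∀ v : V, v ∈ U ↔ ∀ a : A, ρ (a : H) v = v := fun v => Iff.rfl
  have hstabH : ∀ g : H, ∀ v ∈ U, ρ g v ∈ U := by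
    intro g v hv
    rw [hUmem] at hv ⊢
    intro a
    have hmem : (g⁻¹ * (a : H) * g) ∈ A := Subgroup.Normal.conj_mem' ‹A.Normal› _ a.2 g
    have := hv ⟨_, hmem⟩
    calc ρ (a:H) (ρ g v) = ρ ((a:H) * g) v := by rw [map_mul, Module.End.mul_apply]
    _ = ρ (g * (g⁻¹ * (a:H) * g)) v := by group
    _ = ρ g (ρ (g⁻¹ * (a:H) * g) v) := by rw [map_mul, Module.End.mul_apply]
    _ = ρ g v := by rw [this]
  obtain ⟨v, hvU, hv0, hvP⟩ :=
    pgroup_fixed (ρ.comp (P : Subgroup H).subtype) P.isPGroup' U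
      (fun p w hw => hstabH (p : H) w hw) h
  have hsup : A ⊔ (P : Subgroup H) = ⊤ := by
    obtain ⟨m, hm⟩ := hA3
    have h1 : (A ⊔ (P : Subgroup H)).index ∣ r ^ m :=
      hm ▸ Subgroup.index_dvd_of_le le_sup_left
    have h2 : (A ⊔ (P : Subgroup H)).index ∣ (P : Subgroup H).index :=
      Subgroup.index_dvd_of_le le_sup_right
    have h3 : ¬ r ∣ (P : Subgroup H).index := P.not_dvd_index
    obtain ⟨t, _, hteq⟩ := (Nat.dvd_prime_pow (Fact.out : r.Prime)).mp h1
    have ht0 : t = 0 := by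
      by_contra h0
      exact h3 (dvd_trans (hteq ▸ dvd_pow_self r h0) h2)
    rw [ht0, pow_zero] at hteq
    exact Subgroup.index_eq_one.mp hteq
  rw [Submodule.ne_bot_iff]
  refine ⟨v, ?_, hv0⟩
  rw [Representation.mem_invariants]
  intro g
  have hg : g ∈ ((A : Set H) * ((P : Subgroup H) : Set H)) := by
    rw [← Subgroup.normal_mul, hsup]; trivial
  obtain ⟨a, ha, p, hp, rfl⟩ := hg
  have hp' : ρ p v = v := hvP ⟨p, hp⟩
  have ha' : ρ a v = v := hvU ⟨a, ha⟩
  rw [map_mul, Module.End.mul_apply, hp', ha']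

/-- Let `H` be a finite group, `k` a field of characteristic `r`, and `V` a
finite-dimensional `kH`-module. If the largest normal subgroup `A` of `H` of order coprime
to `r` equals the smallest normal subgroup of `H` with `r`-group quotient, then the
following are equivalent: (i) `V^H ≠ 0`; (ii) the trivial module occurs as a composition
factor of `V` (i.e. there are invariant subspaces `W₁ < W₂` with `H` acting trivially on
`W₂/W₁`); (iii) `V^A ≠ 0`; (iv) `(V*)^H ≠ 0`. -/
theorem stmt0 {r : ℕ} [Fact r.Prime] {k : Type} [Field k] [CharP k r]
    {H : Type} [Group H] [Finite H] {V : Type} [AddCommGroup V] [Module k V]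
    [FiniteDimensional k V] (ρ : Representation k H V)
    (A : Subgroup H) (hAnormal : A.Normal)
    (hA1 : ¬ r ∣ Nat.card A)
    (hA2 : ∀ N : Subgroup H, N.Normal → ¬ r ∣ Nat.card N → N ≤ A)
    (hA3 : ∃ m : ℕ, A.index = r ^ m)
    (hA4 : ∀ N : Subgroup H, N.Normal → (∃ m : ℕ, N.index = r ^ m) → A ≤ N) :
    List.TFAE
      [ Representation.invariants ρ ≠ ⊥,
        (∃ W₁ W₂ : Submodule k V, (∀ g : H, W₁ ≤ W₁.comap (ρ g)) ∧
          (∀ g : H, W₂ ≤ W₂.comap (ρ g)) ∧ W₁ < W₂ ∧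
          (∀ g : H, ∀ v ∈ W₂, ρ g v - v ∈ W₁)),
        Representation.invariants (ρ.comp A.subtype) ≠ ⊥,
        Representation.invariants ρ.dual ≠ ⊥ ] := by
  classical
  haveI := hAnormal
  letI := Fintype.ofFinite A
  have hcA : ((Nat.card A : k)) ≠ 0 := by
    rw [Ne, CharP.cast_eq_zero_iff k r]
    exact hA1
  tfae_have 1 → 2 := by
    intro h1
    refine ⟨⊥, Representation.invariants ρ, by simp, ?_, bot_lt_iff_ne_bot.mpr h1, ?_⟩
    · intro g v hv
      have h : ρ g v = v := hv g
      simpa [Submodule.mem_comap, h] using hv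
    · intro g v hv
      simp [hv g]
  tfae_have 2 → 3 := by
    rintro ⟨W₁, W₂, hW₁, hW₂, hlt, htriv⟩
    obtain ⟨v, hvW₂, hvW₁⟩ := SetLike.exists_of_lt hlt
    set u : V := ∑ a : A, ρ (a : H) v with hu
    have hsumW : (∑ a : A, (ρ (a : H) v - v)) ∈ W₁ :=
      Submodule.sum_mem _ fun a _ => htriv _ v hvW₂
    have hcard : u - (Nat.card A : k) • v ∈ W₁ := by
      have h : ∑ a : A, (ρ (a : H) v - v) = u - (Nat.card A : k) • v := by
        rw [Finset.sum_sub_distrib, Finset.sum_const, Finset.card_univ,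
          Nat.card_eq_fintype_card, Nat.cast_smul_eq_nsmul]
      rwa [h] at hsumW
    have hu0 : u ≠ 0 := by
      intro h0
      apply hvW₁
      rw [h0, zero_sub] at hcard
      have h2 : (Nat.card A : k) • v ∈ W₁ := neg_mem_iff.mp hcard
      have h3 := W₁.smul_mem ((Nat.card A : k))⁻¹ h2
      rwa [inv_smul_smul₀ hcA] at h3
    have hinv : ∀ b : A, ρ (b : H) u = u := by
      intro b
      rw [hu, map_sum]
      refine Fintype.sum_equiv (Equiv.mulLeft b) _ _ fun a => ?_
      simp only [Equiv.coe_mulLeft]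
      rw [Subgroup.coe_mul, map_mul, Module.End.mul_apply]
    rw [Submodule.ne_bot_iff]
    exact ⟨u, fun b => hinv b, hu0⟩
  tfae_have 3 → 1 := fun h3 => ascent ρ A hA3 h3
  tfae_have 3 → 4 := by
    intro h3
    refine ascent ρ.dual A hA3 ?_
    obtain ⟨u, huA, hu0⟩ := Submodule.exists_mem_ne_zero_of_ne_bot h3
    have huA' : ∀ a : A, ρ (a : H) u = u := huA
    obtain ⟨f, hf⟩ : ∃ f : Module.Dual k V, f u ≠ 0 := by
      by_contra hall
      push_neg at hall
      exact hu0 ((Module.forall_dual_apply_eq_zero_iff k u).mp hall)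
    set π : V →ₗ[k] V := ∑ a : A, (ρ (a : H) : V →ₗ[k] V) with hπ
    have hπρ : ∀ b : A, π ∘ₗ ρ ((b : H))⁻¹ = π := by
      intro b
      ext w
      simp only [LinearMap.coe_comp, Function.comp_apply, hπ, LinearMap.coe_sum,
        Finset.sum_apply]
      refine Fintype.sum_equiv (Equiv.mulRight b⁻¹) _ _ fun a => ?_
      simp only [Equiv.coe_mulRight]
      rw [Subgroup.coe_mul, map_mul, Module.End.mul_apply, Subgroup.coe_inv]
    have hπu : π u = (Nat.card A : k) • u := by
      have h : π u = ∑ a : A, ρ (a : H) u := by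
        rw [hπ]; simp only [LinearMap.coe_sum, Finset.sum_apply]
      rw [h]
      calc ∑ a : A, ρ (a : H) u = ∑ _a : A, u := Finset.sum_congr rfl fun a _ => huA' a
        _ = (Fintype.card A) • u := by rw [Finset.sum_const, Finset.card_univ]
        _ = (Nat.card A : k) • u := by rw [Nat.card_eq_fintype_card, Nat.cast_smul_eq_nsmul]
    have hdualinv : ∀ b : A, ρ.dual ((b : H)) (f ∘ₗ π) = f ∘ₗ π := by
      intro b
      show (f ∘ₗ π) ∘ₗ ρ ((b : H))⁻¹ = f ∘ₗ π
      rw [LinearMap.comp_assoc, hπρ b]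
    have hφ0 : (f ∘ₗ π) ≠ 0 := by
      intro h0
      have h : (f ∘ₗ π) u = 0 := by rw [h0]; rfl
      rw [LinearMap.comp_apply, hπu, map_smul, smul_eq_mul] at h
      exact (mul_ne_zero hcA hf) h
    rw [Submodule.ne_bot_iff]
    exact ⟨f ∘ₗ π, fun b => hdualinv b, hφ0⟩
  tfae_have 4 → 2 := by
    intro h4
    obtain ⟨f, hfinv, hf0⟩ := Submodule.exists_mem_ne_zero_of_ne_bot h4
    have hfinv' : ∀ g : H, f ∘ₗ (ρ g⁻¹) = f := hfinv
    have hfg : ∀ (g : H) (v : V), f (ρ g v) = f v := by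
      intro g v
      conv_rhs => rw [← hfinv' g⁻¹]
      simp [LinearMap.comp_apply]
    refine ⟨LinearMap.ker f, ⊤, ?_, fun g => by simp, ?_, ?_⟩
    · intro g v hv
      simp only [Submodule.mem_comap, LinearMap.mem_ker] at hv ⊢
      rw [hfg g v, hv]
    · rw [lt_top_iff_ne_top]
      intro h
      exact hf0 (LinearMap.ker_eq_top.mp h)
    · intro g v _
      rw [LinearMap.mem_ker, map_sub, hfg, sub_self]
  tfae_finish
end

section
/- Let H be a finite group with O_{r'}(H) = O^r(H) = A, k a field of characteristic r, and V a kH-module with V^H = 0. Then the group cohomology H^n(H, V) = 0 for all n ≥ 0. -/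
/-!
Since `|A|` is invertible in `k` and `A` is normal, averaging over `A` is a natural endomorphism
`e` of the identity functor of `Rep k H`. It is the identity on the trivial module `k`. It is zero
on `V`, because `V^A = 0`: otherwise `V^A` would be a nonzero representation of the `r`-group
`H/A` in characteristic `r`, hence would contain a nonzero `H`-fixed vector. Naturality of `e`
makes its components on a projective resolution of `k` a lift of `𝟙 k`, hence homotopic to the
identity, while they induce zero on `Hom(-, V)`; so `Extⁿ(k, V) = Hⁿ(H, V)` vanishes.
-/

open CategoryTheory Limits

universe w

namespace Representation

section PGroup

variable {p : ℕ} [Fact p.Prime] {k G V : Type*} [Field k] [CharP k p] [Group G] [Finite G]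
  [AddCommGroup V] [Module k V]

theorem invariants_ne_bot_of_isPGroup [Nontrivial V] (hG : IsPGroup p G)
    (ρ : Representation k G V) : invariants ρ ≠ ⊥ := by
  obtain ⟨v, hv⟩ := exists_ne (0 : V)
  have hpV (x : V) : p • x = 0 := by
    rw [← Nat.cast_smul_eq_nsmul k, CharP.cast_eq_zero, zero_smul]
  -- The orbit of `v` generates a finite `G`-stable subgroup of order divisible by `p`;
  -- counting fixed points modulo `p` then produces a nonzero fixed point.
  let U : AddSubgroup V := AddSubgroup.closure (Set.range fun g => ρ g v)
  have hU (g : G) {x : V} (hx : x ∈ U) : ρ g x ∈ U := by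
    have : U.map (ρ g).toAddMonoidHom ≤ U := by
      rw [AddMonoidHom.map_closure, AddSubgroup.closure_le]
      rintro _ ⟨_, ⟨h, rfl⟩, rfl⟩
      exact AddSubgroup.subset_closure ⟨g * h, by simp⟩
    exact this ⟨x, hx, rfl⟩
  let _ : MulAction G V := MulAction.compHom V ρ
  let U' : SubMulAction G V := ⟨U, fun g _ hx => hU g hx⟩
  have : Finite U := AddCommGroup.finite_of_fg_isAddTorsion _ fun x =>
    isOfFinAddOrder_iff_nsmul_eq_zero.2 ⟨p, (Fact.out : p.Prime).pos, Subtype.ext (hpV x)⟩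
  have hdvd : p ∣ Nat.card U' := by
    have hvU : v ∈ U := AddSubgroup.subset_closure ⟨1, by simp⟩
    have := addOrderOf_dvd_natCard (⟨v, hvU⟩ : U)
    rwa [addOrderOf_eq_prime (Subtype.ext (hpV v)) (by simpa using hv)] at this
  obtain ⟨b, hb, hb0⟩ := hG.exists_fixed_point_of_prime_dvd_card_of_fixed_point U' hdvd
    (a := ⟨0, U.zero_mem⟩) fun g => Subtype.ext (map_zero (ρ g))
  intro hbot
  have hbinv : (b : V) ∈ invariants ρ := fun g => congrArg Subtype.val (hb g)
  rw [hbot, Submodule.mem_bot] at hbinv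
  exact hb0 (Subtype.ext hbinv.symm)

theorem invariants_comp_subtype_eq_bot (ρ : Representation k G V) {S : Subgroup G} [S.Normal]
    (hS : IsPGroup p (G ⧸ S)) (hρ : invariants ρ = ⊥) : invariants (ρ.comp S.subtype) = ⊥ := by
  by_contra hne
  have := Submodule.nontrivial_iff_ne_bot.2 hne
  refine invariants_ne_bot_of_isPGroup hS (quotientToInvariants ρ S)
    (eq_bot_iff.2 fun w hw => ?_)
  have hw' : (w : V) ∈ invariants ρ := fun g => congrArg Subtype.val (hw (QuotientGroup.mk g))
  rw [hρ, Submodule.mem_bot] at hw'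
  exact (Submodule.mem_bot _).2 (Subtype.ext hw')

end PGroup

section Average

variable {k G V : Type*} [CommRing k] [Group G] [AddCommGroup V] [Module k V]
  (ρ : Representation k G V) (S : Subgroup G) [Fintype S] [Invertible (Fintype.card S : k)]

lemma averageMap_comp_subtype_apply (v : V) :
    averageMap (ρ.comp S.subtype) v = ⅟(Fintype.card S : k) • ∑ s : S, ρ s v := by
  simp [averageMap, GroupAlgebra.average, map_sum]

lemma averageMap_comp_subtype_comm [S.Normal] (g : G) (v : V) :
    averageMap (ρ.comp S.subtype) (ρ g v) = ρ g (averageMap (ρ.comp S.subtype) v) := by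
  rw [averageMap_comp_subtype_apply, averageMap_comp_subtype_apply, map_smul, map_sum]
  congr 1
  simp only [← Module.End.mul_apply, ← map_mul]
  refine Fintype.sum_equiv (MulAut.conjNormal (H := S) g⁻¹).toEquiv _ _ fun s => ?_
  simp [mul_assoc]

end Average

end Representation

namespace Rep

open Representation

variable {k G : Type*} [CommRing k] [Group G] (S : Subgroup G) [S.Normal] [Fintype S]
  [Invertible (Fintype.card S : k)]

noncomputable def averageNatTrans : 𝟭 (Rep.{w} k G) ⟶ 𝟭 (Rep.{w} k G) where
  app W := ConcreteCategory.ofHom <| LinearMap.intertwiningMap_of_isIntertwiningMap W.ρ W.ρ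
    (averageMap (W.ρ.comp S.subtype)) (W.ρ.averageMap_comp_subtype_comm S)
  naturality W W' f := by
    ext v
    change averageMap _ (f.hom v) = f.hom (averageMap _ v)
    simp only [averageMap_comp_subtype_apply, map_smul, map_sum, hom_comm_apply]

variable {S}

lemma averageNatTrans_app_eq_id {W : Rep.{w} k G} (hW : invariants (W.ρ.comp S.subtype) = ⊤) :
    (averageNatTrans S).app W = 𝟙 W := by
  ext v
  exact averageMap_id _ v (hW ▸ Submodule.mem_top)

lemma averageNatTrans_app_eq_zero {W : Rep.{w} k G}
    (hW : invariants (W.ρ.comp S.subtype) = ⊥) : (averageNatTrans S).app W = 0 := by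
  ext v
  exact (Submodule.mem_bot k).1 (hW ▸ averageMap_invariant _ v)

end Rep

theorem isZero_Ext_of_natTrans {R : Type*} [Ring R] {C : Type*} [Category* C] [Abelian C]
    [Linear R C] [EnoughProjectives C] {X Y : C} (τ : 𝟭 C ⟶ 𝟭 C) (hX : τ.app X = 𝟙 X)
    (hY : τ.app Y = 0) (n : ℕ) : IsZero (((Ext R C n).obj (Opposite.op X)).obj Y) := by
  let P := projectiveResolution X
  refine IsZero.of_iso ?_ (P.isoExt n Y)
  let τP : P.complex ⟶ P.complex :=
    { f := fun i => τ.app _, comm' := fun _ _ _ => (τ.naturality _).symm }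
  have hτP : τP ≫ P.π = P.π ≫ (ChainComplex.single₀ C).map (𝟙 X) := by
    rw [CategoryTheory.Functor.map_id, Category.comp_id]
    refine HomologicalComplex.to_single_hom_ext ?_
    change τ.app _ ≫ P.π.f 0 = P.π.f 0
    have := τ.naturality (P.π.f 0)
    dsimp only [Functor.id_map, Functor.id_obj] at this
    rw [← this]
    -- `((single₀ C).obj X).X 0` is `X` only up to definitional unfolding
    erw [hX]
    exact Category.comp_id _
  let F := ((linearYoneda R C).obj Y).rightOp
  have ht := (F.mapHomotopy (ProjectiveResolution.liftHomotopy (𝟙 X) (𝟙 _) τP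
    (by simp) hτP)).unop
  have h1 : (HomologicalComplex.unopFunctor _ _).map
      ((F.mapHomologicalComplex _).map (𝟙 P.complex)).op = 𝟙 _ := by
    simp
  have h0 : (HomologicalComplex.unopFunctor _ _).map
      ((F.mapHomologicalComplex _).map τP).op = 0 := by
    ext i φ
    have hkill (ψ : P.complex.X i ⟶ Y) : τ.app _ ≫ ψ = 0 := by
      simpa [hY] using (τ.naturality ψ).symm
    exact hkill φ
  have := ht.homologyMap_eq n
  rw [h1, h0, HomologicalComplex.homologyMap_id, HomologicalComplex.homologyMap_zero] at this
  exact (IsZero.iff_id_eq_zero _).2 this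

theorem stmt1_general {r : ℕ} [Fact r.Prime] {k H : Type} [Field k] [CharP k r] [Group H] [Finite H]
    (V : Rep k H)
    (A : Subgroup H) (hAnormal : A.Normal)
    (hA1 : ¬ r ∣ Nat.card A)
    (hA3 : ∃ m : ℕ, A.index = r ^ m)
    (hV : Representation.invariants V.ρ = ⊥) :
    ∀ n : ℕ, CategoryTheory.Limits.IsZero (groupCohomology V n) := by
  intro n
  have := hAnormal
  have : Fintype A := Fintype.ofFinite _
  have : Invertible (Fintype.card A : k) := invertibleOfNonzero <| by
    rwa [Ne, CharP.cast_eq_zero_iff k r, ← Nat.card_eq_fintype_card]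
  have hquot : IsPGroup r (H ⧸ A) := by
    obtain ⟨m, hm⟩ := hA3
    exact IsPGroup.of_card hm
  have hVA := V.ρ.invariants_comp_subtype_eq_bot hquot hV
  refine IsZero.of_iso (isZero_Ext_of_natTrans (Rep.averageNatTrans A) ?_
    (Rep.averageNatTrans_app_eq_zero hVA) n) (groupCohomologyIsoExt V n)
  exact Rep.averageNatTrans_app_eq_id (by ext; simp)

/-- Let `H` be a finite group with `O_{r'}(H) = O^r(H) = A`, `k` a field of
characteristic `r`, and `V` a `kH`-module with `V^H = 0`. Then `H^n(H, V) = 0` for all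
`n ≥ 0`. -/
theorem stmt1 {r : ℕ} [Fact r.Prime] {k H : Type} [Field k] [CharP k r] [Group H] [Finite H]
    (V : Rep k H) [FiniteDimensional k V]
    (A : Subgroup H) (hAnormal : A.Normal)
    (hA1 : ¬ r ∣ Nat.card A)
    (hA2 : ∀ N : Subgroup H, N.Normal → ¬ r ∣ Nat.card N → N ≤ A)
    (hA3 : ∃ m : ℕ, A.index = r ^ m)
    (hA4 : ∀ N : Subgroup H, N.Normal → (∃ m : ℕ, N.index = r ^ m) → A ≤ N)
    (hV : Representation.invariants V.ρ = ⊥) :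
    ∀ n : ℕ, CategoryTheory.Limits.IsZero (groupCohomology V n) :=
  stmt1_general V A hAnormal hA1 hA3 hV
end

section
/- Let G be a finite group, k an algebraically closed field of characteristic r, H ≤ G with O_{r'}(H) = O^r(H), and P = Ind_H^G k. If V is a kG-module with V^H = 0, then dim H^1(G, V) = dim Hom_G(V*, P/k), where k embeds in P as the G-fixed submodule. -/
/-- `OrEqOr r H` says that the largest normal subgroup of `H` of order not divisible
by `r` coincides with the smallest normal subgroup of `H` with `r`-group quotient
(i.e. `O_{r'}(H) = O^r(H)`), where for finite `H` the quotient `H ⧸ N` being an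
`r`-group is expressed by the index of `N` being a power of `r`. -/
def OrEqOr (r : ℕ) (H : Type) [Group H] : Prop :=
  ∃ A : Subgroup H, A.Normal ∧ (¬ r ∣ Nat.card A) ∧
    (∀ N : Subgroup H, N.Normal → ¬ r ∣ Nat.card N → N ≤ A) ∧
    (∃ m : ℕ, A.index = r ^ m) ∧
    (∀ N : Subgroup H, N.Normal → (∃ m : ℕ, N.index = r ^ m) → A ≤ N)

/-- The quotient representation on `V ⧸ W` for a `G`-invariant subspace `W`. -/
noncomputable def Representation.quot {k G V : Type} [Field k] [Group G] [AddCommGroup V]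
    [Module k V] (ρ : Representation k G V) (W : Submodule k V)
    (hW : ∀ g : G, W ≤ W.comap (ρ g)) : Representation k G (V ⧸ W) where
  toFun g := W.mapQ W (ρ g) (hW g)
  map_one' := by
    apply Submodule.linearMap_qext; ext v; simp [Submodule.mapQ_apply]
  map_mul' g h := by
    apply Submodule.linearMap_qext; ext v; simp [Submodule.mapQ_apply]

/-- The permutation module `P = Ind_H^G k` on the cosets of `H`, as a representation. -/
noncomputable def permRep (k G : Type) [Field k] [Group G] (H : Subgroup G) : Rep k G :=
  Rep.ofMulAction k G (G ⧸ H)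

/-- The quotient `P / P^G` of the permutation module on cosets of `H` by its
`G`-fixed submodule. -/
noncomputable def permQuot (k G : Type) [Field k] [Group G] (H : Subgroup G) : Rep k G :=
  Rep.of ((Representation.ofMulAction k G (G ⧸ H)).quot
    (Representation.invariants (Representation.ofMulAction k G (G ⧸ H)))
    (fun g v hv => by
      rw [Submodule.mem_comap,
        (Representation.mem_invariants (Representation.ofMulAction k G (G ⧸ H)) v).mp hv g]
      exact hv))

open CategoryTheory

/-!
A cocycle `f ∈ Z¹(G, V)` vanishing on `H` is the same thing as a `G`-map `V* ⟶ P/k`: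
`f` descends to `G ⧸ H`, and `φ` corresponds to `f` via `ξ (f g) = φ(ξ)(gH) - φ(ξ)(H)`.
Such cocycles represent `H¹(G, V)` bijectively: two of them differing by a coboundary `d v`
force `v ∈ V^H = 0`, and every class has such a representative because `H¹(H, V) = 0`.
The latter holds since, for `A = O_{r'}(H)`, averaging over `A` makes a cocycle vanish on `A`,
after which its values lie in `V^A`; and `V^A = 0`, as otherwise the `r`-group `H ⧸ A` would
fix a nonzero vector of `V^A` in characteristic `r`, contradicting `V^H = 0`.
-/

namespace Representation

section

variable {k G V : Type*} [CommRing k] [Group G] [AddCommGroup V] [Module k V]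

theorem mem_invariants_of_eq_zero_on_normal (ρ : Representation k G V) {f : G → V}
    (hf : ∀ g h, f (g * h) = ρ g (f h) + f g) {A : Subgroup G} [hAn : A.Normal]
    (hfA : ∀ a ∈ A, f a = 0) (g : G) : f g ∈ invariants (ρ.comp A.subtype) := by
  rintro ⟨a, ha⟩
  have h₁ := hf a g
  have h₂ := hf g (g⁻¹ * a * g)
  rw [hfA a ha, add_zero] at h₁
  rw [hfA (g⁻¹ * a * g) (hAn.conj_mem' a ha g), map_zero, zero_add] at h₂
  simp only [← mul_assoc, mul_inv_cancel, one_mul] at h₂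
  exact h₁.symm.trans h₂

theorem mem_invariants_ofMulAction_iff {X : Type*} [MulAction G X] (p : MonoidAlgebra k X) :
    p ∈ invariants (ofMulAction k G X) ↔ ∀ (g : G) x, p.coeff (g • x) = p.coeff x := by
  simp only [mem_invariants, MonoidAlgebra.ext_iff, Finsupp.ext_iff, coeff_ofMulAction]
  exact ⟨fun h g x => by simpa using h g⁻¹ x, fun h g x => h g⁻¹ x⟩

end

section

variable {k G V : Type*} [Field k] [Group G] [AddCommGroup V] [Module k V]

theorem exists_ne_zero_mem_invariants_of_isPGroup {p : ℕ} [Fact p.Prime] [CharP k p]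
    [Finite G] (hG : IsPGroup p G) (ρ : Representation k G V) [Nontrivial V] :
    ∃ v ∈ invariants ρ, v ≠ 0 := by
  obtain ⟨x, hx⟩ := exists_ne (0 : V)
  let _ : Algebra (ZMod p) k := ZMod.algebra k p
  let _ : Module (ZMod p) V := Module.compHom V (algebraMap (ZMod p) k)
  have _ : IsScalarTower (ZMod p) k V := IsScalarTower.of_algebraMap_smul fun _ _ => rfl
  -- the `𝔽_p`-span of the orbit of `x` is a finite `G`-set of `p`-power order fixing `0`
  let S := Submodule.span (ZMod p) (Set.range fun g => ρ g x)
  have : Module.Finite (ZMod p) S := Module.Finite.span_of_finite _ (Set.finite_range _)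
  have : Fintype S := @Fintype.ofFinite S (Module.finite_of_finite (ZMod p))
  have hS : p ∣ Nat.card S := by
    have : Nontrivial S := ⟨⟨⟨x, Submodule.subset_span ⟨1, by simp⟩⟩, 0,
      fun h => hx (congrArg Subtype.val h)⟩⟩
    rw [Nat.card_eq_fintype_card, Module.card_eq_pow_finrank (K := ZMod p), ZMod.card]
    exact dvd_pow_self p Module.finrank_pos.ne'
  let _ : MulAction G V := MulAction.compHom V ρ
  let M : SubMulAction G V :=
    { carrier := S
      smul_mem' := fun g v hv => by
        refine Submodule.span_mono ?_
          (Submodule.apply_mem_span_image_of_mem_span ((ρ g).restrictScalars (ZMod p)) hv)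
        rintro _ ⟨_, ⟨h, rfl⟩, rfl⟩
        exact ⟨g * h, by simp⟩ }
  obtain ⟨y, hy, hy0⟩ := hG.exists_fixed_point_of_prime_dvd_card_of_fixed_point M hS
    (a := ⟨0, S.zero_mem⟩) fun g => Subtype.ext (map_zero (ρ g))
  exact ⟨y, fun g => congrArg Subtype.val (hy g), fun h => hy0 (Subtype.ext h.symm)⟩

theorem invariants_comp_subtype_eq_bot_of_isPGroup {p : ℕ} [Fact p.Prime] [CharP k p]
    (ρ : Representation k G V) {N : Subgroup G} [N.Normal] [Finite (G ⧸ N)]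
    (hN : IsPGroup p (G ⧸ N)) (hρ : invariants ρ = ⊥) :
    invariants (ρ.comp N.subtype) = ⊥ := by
  by_contra hne
  have : Nontrivial (invariants (ρ.comp N.subtype)) := Submodule.nontrivial_iff_ne_bot.2 hne
  obtain ⟨y, hy, hy0⟩ :=
    exists_ne_zero_mem_invariants_of_isPGroup hN (ρ.quotientToInvariants N)
  have hyρ : (y : V) ∈ invariants ρ := fun g => congrArg Subtype.val (hy g)
  rw [hρ, Submodule.mem_bot] at hyρ
  exact hy0 (Subtype.ext hyρ)

theorem exists_eq_sub_on_of_natCard_ne_zero (ρ : Representation k G V) {f : G → V}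
    (hf : ∀ g h, f (g * h) = ρ g (f h) + f g) {A : Subgroup G} [Finite A]
    (hA : (Nat.card A : k) ≠ 0) : ∃ v, ∀ a ∈ A, f a = ρ a v - v := by
  have : Fintype A := Fintype.ofFinite A
  set s := ∑ b : A, f b
  have key (a : A) : s = ρ a s + Nat.card A • f a :=
    calc s = ∑ b : A, f (a * b : A) := (Equiv.sum_comp (Equiv.mulLeft a) _).symm
      _ = ∑ b : A, (ρ a (f b) + f a) := Finset.sum_congr rfl fun b _ => hf a b
      _ = ρ a s + Nat.card A • f a := by
        rw [Finset.sum_add_distrib, ← map_sum, Finset.sum_const, Finset.card_univ,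
          Nat.card_eq_fintype_card]
  refine ⟨-((Nat.card A : k)⁻¹ • s), fun a ha => ?_⟩
  have h : (Nat.card A : k) • f a = s - ρ a s := by
    rw [Nat.cast_smul_eq_nsmul, eq_sub_iff_add_eq', ← key ⟨a, ha⟩]
  rw [map_neg, map_smul, ← inv_smul_smul₀ hA (f a), h, smul_sub]
  abel

end

theorem exists_eq_sub_of_orEqOr {r : ℕ} [Fact r.Prime] {k H V : Type} [Field k] [CharP k r]
    [Group H] [Finite H] [AddCommGroup V] [Module k V] (hH : OrEqOr r H)
    (ρ : Representation k H V) (hρ : invariants ρ = ⊥) {f : H → V}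
    (hf : ∀ g h, f (g * h) = ρ g (f h) + f g) : ∃ v, ∀ h, f h = ρ h v - v := by
  obtain ⟨A, hAn, hAr, -, ⟨m, hAi⟩, -⟩ := hH
  obtain ⟨v, hv⟩ := ρ.exists_eq_sub_on_of_natCard_ne_zero hf (A := A)
    (by rwa [Ne, CharP.cast_eq_zero_iff k r])
  have hf' (g h : H) : f (g * h) - (ρ (g * h) v - v) =
      ρ g (f h - (ρ h v - v)) + (f g - (ρ g v - v)) := by
    rw [hf, map_mul, Module.End.mul_apply, map_sub, map_sub]
    abel
  have hA : invariants (ρ.comp A.subtype) = ⊥ :=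
    ρ.invariants_comp_subtype_eq_bot_of_isPGroup (IsPGroup.of_card (by rw [← hAi]; rfl)) hρ
  refine ⟨v, fun h => sub_eq_zero.1 ?_⟩
  have := ρ.mem_invariants_of_eq_zero_on_normal hf' (fun a ha => sub_eq_zero.2 (hv a ha)) h
  rwa [hA, Submodule.mem_bot] at this

end Representation

namespace permQuot

variable {k G : Type} [Field k] [Group G] (H : Subgroup G)

theorem mem_invariants_iff (p : MonoidAlgebra k (G ⧸ H)) :
    p ∈ Representation.invariants (Representation.ofMulAction k G (G ⧸ H)) ↔
      ∀ g : G, p.coeff (g : G ⧸ H) = p.coeff ((1 : G) : G ⧸ H) := by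
  rw [Representation.mem_invariants_ofMulAction_iff]
  refine ⟨fun h g => by simpa using h g (1 : G), fun h g x => ?_⟩
  induction x using QuotientGroup.induction_on with
  | H a => rw [MulAction.Quotient.smul_mk, smul_eq_mul, h, h a]

noncomputable def eval (g : G) : (permQuot k G H).V →ₗ[k] k :=
  Submodule.liftQ _ ((Finsupp.lapply (g : G ⧸ H) - Finsupp.lapply ((1 : G) : G ⧸ H)) ∘ₗ
    (MonoidAlgebra.coeffLinearEquiv k).toLinearMap) fun p hp => by
      simp [(mem_invariants_iff H p).1 hp g]

theorem ρ_mk (g : G) (p : MonoidAlgebra k (G ⧸ H)) :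
    (permQuot k G H).ρ g (Submodule.Quotient.mk p) =
      Submodule.Quotient.mk (Representation.ofMulAction k G (G ⧸ H) g p) := rfl

theorem eval_mk (g : G) (p : MonoidAlgebra k (G ⧸ H)) :
    eval H g (Submodule.Quotient.mk p) = p.coeff (g : G ⧸ H) - p.coeff ((1 : G) : G ⧸ H) := rfl

theorem eval_eq_zero_of_mem {g : G} (hg : g ∈ H) (q : (permQuot k G H).V) : eval H g q = 0 := by
  induction q using Submodule.Quotient.induction_on with
  | H p => rw [eval_mk, QuotientGroup.eq.2 (show g⁻¹ * 1 ∈ H by simpa using hg), sub_self]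

theorem eval_mul (g₁ g₂ : G) (q : (permQuot k G H).V) :
    eval H (g₁ * g₂) q = eval H g₂ ((permQuot k G H).ρ g₁⁻¹ q) + eval H g₁ q := by
  induction q using Submodule.Quotient.induction_on with
  | H p =>
    simp only [ρ_mk, eval_mk, Representation.coeff_ofMulAction, inv_inv,
      MulAction.Quotient.smul_mk, smul_eq_mul, mul_one]
    ring

theorem eq_zero_of_forall_eval_eq_zero {q : (permQuot k G H).V} (hq : ∀ g, eval H g q = 0) :
    q = 0 := by
  induction q using Submodule.Quotient.induction_on with
  | H p =>
    refine (Submodule.Quotient.mk_eq_zero _).2 ((mem_invariants_iff H p).2 fun g => ?_)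
    simpa [eval_mk, sub_eq_zero] using hq g

end permQuot

namespace groupCohomology

variable {k G : Type} [CommRing k] [Group G] (V : Rep k G) (H : Subgroup G)

def cocyclesVanishingOn : Submodule k (G → V) :=
  cocycles₁ V ⊓ ⨅ h ∈ H, LinearMap.ker (LinearMap.proj h)

variable {V H} in
theorem mem_cocyclesVanishingOn {f : G → V} :
    f ∈ cocyclesVanishingOn V H ↔ f ∈ cocycles₁ V ∧ ∀ h ∈ H, f h = 0 := by
  simp [cocyclesVanishingOn, Submodule.mem_iInf]

theorem bijective_H1π_comp_inclusion_cocyclesVanishingOn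
    (hV : Representation.invariants (V.ρ.comp H.subtype) = ⊥)
    (hH : ∀ f ∈ cocycles₁ V, ∃ v, ∀ h ∈ H, f h = V.ρ h v - v) :
    Function.Bijective ((H1π V).hom ∘ₗ Submodule.inclusion
      (inf_le_left : cocyclesVanishingOn V H ≤ cocycles₁ V)) := by
  constructor
  · rw [← LinearMap.ker_eq_bot, LinearMap.ker_eq_bot']
    rintro ⟨f, hf⟩ hf0
    obtain ⟨v, hv⟩ := (H1π_eq_zero_iff _).1 hf0
    have hvH : v ∈ Representation.invariants (V.ρ.comp H.subtype) := fun h =>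
      sub_eq_zero.1 ((congrFun hv h).trans ((mem_cocyclesVanishingOn.1 hf).2 h h.2))
    rw [hV, Submodule.mem_bot] at hvH
    ext g
    have := congrFun hv g
    simp only [hvH, d₀₁_hom_apply, map_zero, sub_zero] at this
    exact this.symm
  · intro c
    obtain ⟨f, rfl⟩ := (ModuleCat.epi_iff_surjective (H1π V)).1 inferInstance c
    obtain ⟨v, hv⟩ := hH f f.2
    have hd : (d₀₁ V).hom v ∈ cocycles₁ V := d₀₁_apply_mem_cocycles₁ v
    have hfv : f - (d₀₁ V).hom v ∈ cocyclesVanishingOn V H :=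
      mem_cocyclesVanishingOn.2
        ⟨sub_mem f.2 hd, fun h hh => by simp [d₀₁_hom_apply, hv h hh]⟩
    refine ⟨⟨_, hfv⟩, ?_⟩
    have : (H1π V).hom ⟨_, hd⟩ = 0 := (H1π_eq_zero_iff _).2 ⟨v, rfl⟩
    change (H1π V).hom (f - ⟨_, hd⟩) = _
    rw [map_sub, this, sub_zero]

end groupCohomology

open groupCohomology permQuot

section HomOfCocycle

variable {k G : Type} [Field k] [Group G] {H : Subgroup G} {V : Rep k G}

noncomputable def cosetLift {f : G → V} (hf : f ∈ cocyclesVanishingOn V H) : G ⧸ H → V :=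
  Quotient.lift f fun a b hab => by
    obtain ⟨hf₁, hf₀⟩ := mem_cocyclesVanishingOn.1 hf
    rw [← mul_inv_cancel_left a b, (mem_cocycles₁_iff f).1 hf₁ a,
      hf₀ _ (QuotientGroup.leftRel_apply.1 hab), map_zero, zero_add]

theorem cosetLift_mk {f : G → V} (hf : f ∈ cocyclesVanishingOn V H) (g : G) :
    cosetLift hf g = f g := rfl

theorem cosetLift_smul {f : G → V} (hf : f ∈ cocyclesVanishingOn V H) (g : G) (x : G ⧸ H) :
    cosetLift hf (g • x) = V.ρ g (cosetLift hf x) + f g := by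
  induction x using QuotientGroup.induction_on with
  | H a => exact (mem_cocycles₁_iff f).1 (mem_cocyclesVanishingOn.1 hf).1 g a

variable [Finite (G ⧸ H)]

noncomputable def dualToPerm {f : G → V} (hf : f ∈ cocyclesVanishingOn V H) :
    Module.Dual k V →ₗ[k] MonoidAlgebra k (G ⧸ H) where
  toFun ξ := MonoidAlgebra.ofCoeff (Finsupp.equivFunOnFinite.symm fun x => ξ (cosetLift hf x))
  map_add' ξ η := by ext; simp
  map_smul' c ξ := by ext; simp

theorem coeff_dualToPerm {f : G → V} (hf : f ∈ cocyclesVanishingOn V H) (ξ : Module.Dual k V)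
    (x : G ⧸ H) : (dualToPerm hf ξ).coeff x = ξ (cosetLift hf x) := by
  simp [dualToPerm]

noncomputable def homOfCocycle {f : G → V} (hf : f ∈ cocyclesVanishingOn V H) :
    Rep.of V.ρ.dual ⟶ permQuot k G H :=
  Rep.ofHom ⟨(Submodule.mkQ _) ∘ₗ dualToPerm hf, fun g => LinearMap.ext fun ξ => by
    -- the two sides differ by the constant function `-ξ (f g⁻¹)`
    change Submodule.Quotient.mk (dualToPerm hf (V.ρ.dual g ξ)) =
      Submodule.Quotient.mk (Representation.ofMulAction k G (G ⧸ H) g (dualToPerm hf ξ))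
    rw [Submodule.Quotient.eq, mem_invariants_iff]
    intro g'
    simp only [MonoidAlgebra.coeff_sub, Finsupp.sub_apply, coeff_dualToPerm,
      Representation.coeff_ofMulAction, cosetLift_smul, Representation.dual_apply,
      Module.Dual.transpose_apply, map_add, LinearMap.comp_apply]
    ring⟩

end HomOfCocycle

section CocycleOfHom

variable {k G : Type} [Field k] [Group G] (H : Subgroup G) (V : Rep k G) [FiniteDimensional k V]

noncomputable def cocycleOfHom (φ : Rep.of V.ρ.dual ⟶ permQuot k G H) (g : G) : V :=
  (Module.evalEquiv k V).symm (eval H g ∘ₗ φ.hom.toLinearMap)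

variable {H V}

theorem apply_cocycleOfHom (φ : Rep.of V.ρ.dual ⟶ permQuot k G H) (g : G)
    (ξ : Module.Dual k V) : ξ (cocycleOfHom H V φ g) = eval H g (φ.hom ξ) := by
  simp [cocycleOfHom]

theorem cocycleOfHom_mem (φ : Rep.of V.ρ.dual ⟶ permQuot k G H) :
    cocycleOfHom H V φ ∈ cocyclesVanishingOn V H := by
  refine mem_cocyclesVanishingOn.2
    ⟨(mem_cocycles₁_iff _).2 fun g₁ g₂ => ?_, fun h hh => ?_⟩
  · refine (Module.evalEquiv k V).injective (LinearMap.ext fun ξ => ?_)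
    have hdual : ξ (V.ρ g₁ (cocycleOfHom H V φ g₂)) =
        (V.ρ.dual g₁⁻¹ ξ) (cocycleOfHom H V φ g₂) := by
      simp [Representation.dual_apply, Module.Dual.transpose_apply]
    simp only [Module.evalEquiv_apply, map_add, LinearMap.add_apply, Module.Dual.eval_apply,
      hdual, apply_cocycleOfHom, eval_mul]
    rw [← Rep.hom_comm_apply φ g₁⁻¹ ξ]
  · refine (Module.evalEquiv k V).injective (LinearMap.ext fun ξ => ?_)
    simp [apply_cocycleOfHom, eval_eq_zero_of_mem H hh]

theorem cocycleOfHom_homOfCocycle [Finite (G ⧸ H)] {f : G → V}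
    (hf : f ∈ cocyclesVanishingOn V H) : cocycleOfHom H V (homOfCocycle hf) = f := by
  ext g
  refine (Module.evalEquiv k V).injective (LinearMap.ext fun ξ => ?_)
  have hf₁ : f 1 = 0 := (mem_cocyclesVanishingOn.1 hf).2 1 H.one_mem
  simp only [Module.evalEquiv_apply, Module.Dual.eval_apply, apply_cocycleOfHom]
  change eval H g (Submodule.Quotient.mk (dualToPerm hf ξ)) = ξ (f g)
  rw [eval_mk, coeff_dualToPerm, coeff_dualToPerm, cosetLift_mk, cosetLift_mk, hf₁, map_zero,
    sub_zero]

variable (H V) in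
noncomputable def homToCocyclesVanishingOn :
    (Rep.of V.ρ.dual ⟶ permQuot k G H) →ₗ[k] cocyclesVanishingOn V H where
  toFun φ := ⟨cocycleOfHom H V φ, cocycleOfHom_mem φ⟩
  map_add' φ ψ := by
    ext g
    refine (Module.evalEquiv k V).injective (LinearMap.ext fun ξ => ?_)
    simp [apply_cocycleOfHom, Rep.add_hom]
  map_smul' c φ := by
    ext g
    refine (Module.evalEquiv k V).injective (LinearMap.ext fun ξ => ?_)
    simp [apply_cocycleOfHom, Rep.smul_hom]

theorem homToCocyclesVanishingOn_injective :
    Function.Injective (homToCocyclesVanishingOn H V) := by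
  rw [← LinearMap.ker_eq_bot, LinearMap.ker_eq_bot']
  intro φ hφ
  ext ξ
  refine eq_zero_of_forall_eval_eq_zero H fun g => ?_
  have hφg : cocycleOfHom H V φ g = 0 := congrFun (congrArg Subtype.val hφ) g
  change eval H g (φ.hom ξ) = 0
  rw [← apply_cocycleOfHom, hφg, map_zero]

variable (H V) in
noncomputable def homEquivCocyclesVanishingOn [Finite (G ⧸ H)] :
    (Rep.of V.ρ.dual ⟶ permQuot k G H) ≃ₗ[k] cocyclesVanishingOn V H :=
  LinearEquiv.ofBijective (homToCocyclesVanishingOn H V)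
    ⟨homToCocyclesVanishingOn_injective,
      fun f => ⟨homOfCocycle f.2, Subtype.ext (cocycleOfHom_homOfCocycle f.2)⟩⟩

end CocycleOfHom

theorem stmt3_general {r : ℕ} [Fact r.Prime] {k G : Type} [Field k] [CharP k r]
    [Group G] [Finite G] (H : Subgroup G) (hH : OrEqOr r H)
    (V : Rep k G) [FiniteDimensional k V]
    (hV : Representation.invariants (V.ρ.comp H.subtype) = ⊥) :
    Module.finrank k (groupCohomology V 1) =
      Module.finrank k (Rep.of V.ρ.dual ⟶ permQuot k G H) := by
  have hH1 (f) (hf : f ∈ cocycles₁ V) : ∃ v, ∀ h ∈ H, f h = V.ρ h v - v := by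
    obtain ⟨v, hv⟩ := Representation.exists_eq_sub_of_orEqOr hH _ hV (f := fun h : H => f h)
      fun g h => (mem_cocycles₁_iff f).1 hf g h
    exact ⟨v, fun h hh => hv ⟨h, hh⟩⟩
  let e := LinearEquiv.ofBijective _
    (bijective_H1π_comp_inclusion_cocyclesVanishingOn V H hV hH1)
  exact (e.symm.trans (homEquivCocyclesVanishingOn H V).symm).finrank_eq

/-- With `G` finite, `k = k̄` of characteristic `r`, `H ≤ G` with
`O_{r'}(H) = O^r(H)`, `P = Ind_H^G k`, and `V` a `kG`-module with `V^H = 0`, we have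
`dim H^1(G, V) = dim Hom_G(V*, P/k)`, where `k` embeds in `P` as the `G`-fixed
submodule. -/
theorem stmt3 {r : ℕ} [Fact r.Prime] {k G : Type} [Field k] [IsAlgClosed k] [CharP k r]
    [Group G] [Finite G] (H : Subgroup G) (hH : OrEqOr r H)
    (V : Rep k G) [FiniteDimensional k V]
    (hV : Representation.invariants (V.ρ.comp H.subtype) = ⊥) :
    Module.finrank k (groupCohomology V 1) =
      Module.finrank k (Rep.of V.ρ.dual ⟶ permQuot k G H) :=
  stmt3_general H hH V hV
end

section
/- Let G be a finite group, k an algebraically closed field of characteristic r, H ≤ G with O_{r'}(H) = O^r(H), and V an irreducible kG-module that is not a composition factor of the permutation module Ind_H^G k. Then H^1(G, V) = 0. -/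
/-!
Let `A = O_{r'}(H) = O^r(H)`. A nonzero `H`-fixed vector of `V` would give a nonzero map
`k[G/H] → V`, so there is none; hence `V` has no nonzero `A`-fixed vector either, because the
`r`-group `H/A` acting on `V^A` in characteristic `r` would fix a nonzero vector of it.
Given a 1-cocycle `f`, averaging over the `r'`-group `A` lets us subtract a coboundary so that
`f` vanishes on `A`; then each `f h` (`h ∈ H`) is `A`-fixed, so `f` vanishes on `H`. Such a
cocycle descends to `G/H` and extends linearly to a map from the augmentation kernel of `k[G/H]`
to `V`, which is `G`-equivariant; as `V` is not a subquotient of `k[G/H]`, this map and hence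
`f` is zero.
-/

open CategoryTheory MonoidAlgebra groupCohomology Representation

universe u

theorem IsPGroup.exists_invariant_ne_zero {p : ℕ} [Fact p.Prime] {P : Type*} [Group P] [Finite P]
    (hP : IsPGroup p P) {k M : Type*} [CommRing k] [CharP k p] [AddCommGroup M] [Module k M]
    (ρ : Representation k P M) {x : M} (hx : x ≠ 0) : ∃ y ≠ 0, y ∈ ρ.invariants := by
  have hpM : ∀ m : M, p • m = 0 := fun m => by
    rw [← Nat.cast_smul_eq_nsmul k, CharP.cast_eq_zero, zero_smul]
  let _ : Module (ZMod p) M := AddCommGroup.zmodModule (n := p) hpM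
  -- the `𝔽_p`-span of the orbit of `x` is a finite `P`-set whose order is divisible by `p`
  let W : Submodule (ZMod p) M := Submodule.span (ZMod p) (Set.range fun g => ρ g x)
  have hW : ∀ (g : P) (w : M), w ∈ W → ρ g w ∈ W := fun g =>
    Submodule.span_le (p := W.comap ((ρ g).toAddMonoidHom.toZModLinearMap p)).2
      (by rintro _ ⟨g', rfl⟩; exact Submodule.subset_span ⟨g * g', by simp⟩)
  let _ : MulAction P W :=
    { smul g w := ⟨ρ g w, hW g w w.2⟩
      one_smul w := Subtype.ext (by change ρ 1 w = w; simp)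
      mul_smul g g' w := Subtype.ext (by change ρ (g * g') w = ρ g (ρ g' w); simp) }
  have : Module.Finite (ZMod p) W := Module.Finite.span_of_finite _ (Set.finite_range _)
  have : Finite W := Module.finite_of_finite (ZMod p)
  have hxW : x ∈ W := Submodule.subset_span ⟨1, by simp⟩
  have hpW : p ∣ Nat.card W := by
    have h := addOrderOf_dvd_natCard (⟨x, hxW⟩ : W)
    rwa [addOrderOf_eq_prime (Subtype.ext (hpM x)) (fun h => hx (congrArg Subtype.val h))] at h
  obtain ⟨y, hy, hy0⟩ := hP.exists_fixed_point_of_prime_dvd_card_of_fixed_point W hpW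
    (a := 0) (fun g => Subtype.ext (map_zero (ρ g)))
  exact ⟨y, fun h => hy0 (Subtype.ext h.symm), fun g => congrArg Subtype.val (hy g)⟩

theorem Representation.exists_invariant_ne_zero_of_isPGroup_quotient {p : ℕ} [Fact p.Prime]
    {k M H : Type*} [CommRing k] [CharP k p] [AddCommGroup M] [Module k M] [Group H]
    (ρ : Representation k H M) {A : Subgroup H} [A.Normal] [Finite (H ⧸ A)]
    (hA : IsPGroup p (H ⧸ A)) {x : M} (hx : x ≠ 0) (hxA : x ∈ invariants (ρ.comp A.subtype)) :
    ∃ y ≠ 0, y ∈ ρ.invariants := by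
  obtain ⟨y, hy0, hy⟩ := hA.exists_invariant_ne_zero (ρ.quotientToInvariants A)
    (x := ⟨x, hxA⟩) (fun h => hx (congrArg Subtype.val h))
  exact ⟨y, fun h => hy0 (Subtype.ext h), fun g => congrArg Subtype.val (hy g)⟩

section Permutation

variable (k : Type*) {G X M : Type*} [CommRing k] [Group G] [MulAction G X]
  [AddCommMonoid M] [Module k M]

noncomputable def MonoidAlgebra.linearCombination (F : X → M) : k[X] →ₗ[k] M :=
  Finsupp.linearCombination k F ∘ₗ (coeffLinearEquiv k).toLinearMap

variable (X) in
noncomputable def augmentationKer : Submodule k k[X] :=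
  LinearMap.ker (linearCombination k fun _ : X => (1 : k))

variable {k}

@[simp] lemma MonoidAlgebra.linearCombination_single (F : X → M) (x : X) (a : k) :
    linearCombination k F (single x a) = a • F x := by
  simp [MonoidAlgebra.linearCombination]

lemma MonoidAlgebra.linearCombination_ofMulAction (ρ : Representation k G M) {F : X → M}
    {c : G → M} (hF : ∀ g x, F (g • x) = ρ g (F x) + c g) (g : G) (v : k[X]) :
    linearCombination k F (ofMulAction k G X g v) =
      ρ g (linearCombination k F v) + linearCombination k (fun _ => (1 : k)) v • c g := by
  induction v using MonoidAlgebra.induction_linear with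
  | zero => simp
  | add v w hv hw => simp only [map_add, hv, hw, add_smul]; abel
  | single x a => simp [hF, smul_add]

lemma augmentationKer_le_comap (g : G) :
    augmentationKer k X ≤ (augmentationKer k X).comap (ofMulAction k G X g) := fun v hv => by
  have h := linearCombination_ofMulAction (trivial k G k) (F := fun _ : X => (1 : k)) (c := 0)
    (by simp) g v
  simp only [augmentationKer, LinearMap.mem_ker, Submodule.mem_comap] at hv ⊢
  simpa [hv] using h

end Permutation

lemma Representation.exists_lift_quotientGroup {k G M : Type*} [CommRing k] [Group G]
    [AddCommMonoid M] [Module k M] (ρ : Representation k G M) (H : Subgroup G) {φ c : G → M}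
    (hφ : ∀ g g', φ (g * g') = ρ g (φ g') + c g) (hH : ∀ h ∈ H, φ h = φ 1) :
    ∃ F : G ⧸ H → M, (∀ g : G, F g = φ g) ∧ ∀ (g : G) (x : G ⧸ H), F (g • x) = ρ g (F x) + c g := by
  have hconst : ∀ a b : G, a⁻¹ * b ∈ H → φ a = φ b := fun a b hab => by
    rw [← mul_inv_cancel_left a b, hφ, hH _ hab, ← hφ, mul_one]
  refine ⟨fun x => x.liftOn' φ fun a b hab => hconst a b (QuotientGroup.leftRel_apply.mp hab),
    fun g => rfl, fun g x => ?_⟩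
  induction x using QuotientGroup.induction_on with
  | H x => exact hφ g x

instance Rep.mono_subtype {k G : Type*} [CommRing k] [Group G] (A : Rep k G) (W : Submodule k A)
    (hW : ∀ g, W ≤ W.comap (A.ρ g)) : Mono (Rep.subtype A W hW) :=
  (Rep.mono_iff_injective _).2 W.injective_subtype

section Subquotient

variable {k G : Type u} [Field k] [Group G]

def IsSubquotient (V P : Rep k G) : Prop :=
  ∃ (S : Rep k G) (i : S ⟶ P) (π : S ⟶ V), Mono i ∧ Epi π

lemma IsSubquotient.of_ne_zero {V P S : Rep k G} [Simple V] (i : S ⟶ P) [Mono i] {π : S ⟶ V}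
    (hπ : π ≠ 0) : IsSubquotient V P :=
  ⟨S, i, π, inferInstance, epi_of_nonzero_to_simple hπ⟩

variable {H : Subgroup G} {V : Rep k G} [Simple V]

lemma isSubquotient_of_mem_invariants {v : V} (hv : v ∈ invariants (V.ρ.comp H.subtype))
    (hv0 : v ≠ 0) : IsSubquotient V (Rep.ofMulAction k G (G ⧸ H)) := by
  obtain ⟨F, hF1, hF⟩ := V.ρ.exists_lift_quotientGroup H (φ := fun g => V.ρ g v) (c := 0)
    (fun g g' => by simp) (fun h hh => by simpa using hv ⟨h, hh⟩)
  let π : Rep.ofMulAction k G (G ⧸ H) ⟶ V := Rep.ofHom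
    ⟨linearCombination k F, fun g => LinearMap.ext fun x => by
      simpa using linearCombination_ofMulAction V.ρ hF g x⟩
  refine IsSubquotient.of_ne_zero (𝟙 _) (π := π) fun h => hv0 ?_
  have h1 : π.hom (single ((1 : G) : G ⧸ H) 1) = v := by simp [π, hF1]
  rw [← h1, h]
  rfl

lemma isSubquotient_of_cocycle {f : G → V} (hf : f ∈ cocycles₁ V) (hfH : ∀ h ∈ H, f h = 0)
    (hf0 : f ≠ 0) : IsSubquotient V (Rep.ofMulAction k G (G ⧸ H)) := by
  have hf1 : f 1 = 0 := hfH 1 H.one_mem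
  obtain ⟨F, hF1, hF⟩ := V.ρ.exists_lift_quotientGroup H ((mem_cocycles₁_iff f).1 hf)
    (fun h hh => by rw [hfH h hh, hf1])
  let π : Rep.subrepresentation (Rep.ofMulAction k G (G ⧸ H)) (augmentationKer k (G ⧸ H))
      augmentationKer_le_comap ⟶ V :=
    Rep.ofHom ⟨linearCombination k F ∘ₗ (augmentationKer k (G ⧸ H)).subtype,
      fun g => LinearMap.ext fun x => by
        have hx : linearCombination k (fun _ => (1 : k)) (x : k[G ⧸ H]) = 0 := x.2
        simpa [hx] using linearCombination_ofMulAction V.ρ hF g x⟩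
  obtain ⟨g, hg⟩ := Function.ne_iff.mp hf0
  refine IsSubquotient.of_ne_zero (Rep.subtype _ _ _) (π := π) fun h => hg ?_
  have hx : single (g : G ⧸ H) (1 : k) - single ((1 : G) : G ⧸ H) 1 ∈ augmentationKer k _ := by
    simp [augmentationKer]
  have h1 : π.hom ⟨_, hx⟩ = f g := by simp [π, hF1, hf1]
  rw [← h1, h]
  rfl

end Subquotient

section Cocycles

variable {k G M : Type*} [CommRing k] [Group G] [AddCommGroup M] [Module k M]
  (ρ : Representation k G M) {f : G → M} (hf : ∀ g g', f (g * g') = ρ g (f g') + f g)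
include hf

theorem Representation.exists_eq_sub_of_isUnit_card [Finite G] (hG : IsUnit (Nat.card G : k)) :
    ∃ v, ∀ g, f g = ρ g v - v := by
  have := Fintype.ofFinite G
  obtain ⟨u, hu⟩ := hG
  set s := ∑ b, f b
  have hs : ∀ g, ρ g s = s - (Nat.card G : k) • f g := fun g => by
    have hshift : ∑ b, f (g * b) = s := Fintype.sum_equiv (Equiv.mulLeft g) _ _ fun _ => rfl
    simp only [s, map_sum, fun b => eq_sub_of_add_eq (hf g b).symm, Finset.sum_sub_distrib,
      hshift, Finset.sum_const, Finset.card_univ, Nat.card_eq_fintype_card, Nat.cast_smul_eq_nsmul]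
  refine ⟨-((u⁻¹ : kˣ) : k) • s, fun g => ?_⟩
  rw [map_smul, hs, ← hu, smul_sub, smul_smul, neg_mul, Units.inv_mul, neg_smul, neg_smul,
    one_smul]
  abel

theorem Representation.apply_cocycle_eq_self {a g : G} (ha : f a = 0)
    (hga : f (g⁻¹ * a * g) = 0) : ρ a (f g) = f g := by
  have h := hf g (g⁻¹ * a * g)
  rw [hga, map_zero, zero_add, show g * (g⁻¹ * a * g) = a * g by group, hf, ha, add_zero] at h
  exact h

end Cocycles

theorem mem_coboundaries₁_of_not_isSubquotient {k G : Type u} [Field k] [Group G]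
    {H : Subgroup G} {V : Rep k G} [Simple V] (hV : ¬ IsSubquotient V (Rep.ofMulAction k G (G ⧸ H)))
    {A : Subgroup H} [A.Normal] [Finite A] (hA : IsUnit (Nat.card A : k))
    (hVA : ∀ v ∈ invariants ((V.ρ.comp H.subtype).comp A.subtype), v = 0)
    {f : G → V} (hf : f ∈ cocycles₁ V) : f ∈ coboundaries₁ V := by
  obtain ⟨v, hv⟩ := exists_eq_sub_of_isUnit_card ((V.ρ.comp H.subtype).comp A.subtype)
    (f := fun a => f a) (fun a b => (mem_cocycles₁_iff f).1 hf a b) hA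
  set f₀ := f - d₀₁ V v
  have hf₀ : f₀ ∈ cocycles₁ V := sub_mem hf (d₀₁_apply_mem_cocycles₁ v)
  have hf₀A : ∀ a : A, f₀ a = 0 := fun a => by simp [f₀, hv a]
  have hf₀H : ∀ h ∈ H, f₀ h = 0 := fun h hh => hVA _ fun a =>
    V.ρ.apply_cocycle_eq_self ((mem_cocycles₁_iff f₀).1 hf₀) (hf₀A a)
      (hf₀A ⟨_, Subgroup.Normal.conj_mem' ‹_› _ a.2 ⟨h, hh⟩⟩)
  have : f₀ = 0 := by_contra fun h0 => hV (isSubquotient_of_cocycle hf₀ hf₀H h0)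
  exact ⟨v, (sub_eq_zero.mp this).symm⟩

lemma isZero_H1_of_cocycles₁_le_coboundaries₁ {k G : Type u} [CommRing k] [Group G] (A : Rep k G)
    (h : cocycles₁ A ≤ coboundaries₁ A) : Limits.IsZero (H1 A) := by
  have : Subsingleton (H1 A) := subsingleton_of_forall_eq 0 fun x =>
    H1_induction_on x fun f => (H1π_eq_zero_iff f).2 (h f.2)
  exact ModuleCat.isZero_of_subsingleton _

theorem stmt4_general {r : ℕ} [Fact r.Prime] {k G : Type} [Field k] [CharP k r]
    [Group G] [Finite G] (H : Subgroup G) (hH : OrEqOr r H)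
    (V : Rep k G) [Simple V]
    (hnotCF : ¬ ∃ (S : Rep k G) (i : S ⟶ permRep k G H) (π : S ⟶ V), Mono i ∧ Epi π) :
    Limits.IsZero (groupCohomology V 1) := by
  obtain ⟨A, hAn, hAcard, -, ⟨m, hAindex⟩, -⟩ := hH
  have hVA : ∀ v ∈ invariants ((V.ρ.comp H.subtype).comp A.subtype), v = 0 := by
    intro v hv
    by_contra hv0
    obtain ⟨y, hy0, hy⟩ := exists_invariant_ne_zero_of_isPGroup_quotient (V.ρ.comp H.subtype)
      (IsPGroup.of_card hAindex) hv0 hv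
    exact hnotCF (isSubquotient_of_mem_invariants hy hy0)
  have hA : IsUnit (Nat.card A : k) := Ne.isUnit ((CharP.cast_eq_zero_iff k r _).not.mpr hAcard)
  exact isZero_H1_of_cocycles₁_le_coboundaries₁ V fun f hf =>
    mem_coboundaries₁_of_not_isSubquotient hnotCF hA hVA hf

/-- Let `G` be a finite group, `k` an algebraically closed field of
characteristic `r`, `H ≤ G` with `O_{r'}(H) = O^r(H)`, and `V` an irreducible `kG`-module
that is not a composition factor of `Ind_H^G k` (equivalently, for simple `V`: not a
quotient of any subobject of the permutation module). Then `H^1(G, V) = 0`. -/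
theorem stmt4 {r : ℕ} [Fact r.Prime] {k G : Type} [Field k] [IsAlgClosed k] [CharP k r]
    [Group G] [Finite G] (H : Subgroup G) (hH : OrEqOr r H)
    (V : Rep k G) [Simple V] [FiniteDimensional k V]
    (hnotCF : ¬ ∃ (S : Rep k G) (i : S ⟶ permRep k G H) (π : S ⟶ V), Mono i ∧ Epi π) :
    Limits.IsZero (groupCohomology V 1) :=
  stmt4_general H hH V hnotCF
end

section
/- Let G be a finite group, k an algebraically closed field of characteristic r, and V an irreducible kG-module. If dim V > [G : H] for some subgroup H ≤ G with O_{r'}(H) = O^r(H), then H^1(G, V) = 0. -/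
open CategoryTheory

theorem IsPGroup.exists_mem_invariants_ne_zero {p : ℕ} [Fact p.Prime] {k G V : Type*}
    [CommRing k] [CharP k p] [Group G] [Finite G] (hG : IsPGroup p G) [AddCommGroup V]
    [Module k V] [Nontrivial V] (ρ : Representation k G V) :
    ∃ v : V, v ∈ ρ.invariants ∧ v ≠ 0 := by
  obtain ⟨v, hv⟩ := exists_ne (0 : V)
  have hpV (x : V) : p • x = 0 := by
    rw [← Nat.cast_smul_eq_nsmul k, CharP.cast_eq_zero, zero_smul]
  have : Module (ZMod p) V := AddCommGroup.zmodModule hpV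
  -- the counting argument needs a finite `G`-stable set: the `𝔽_p`-span of an orbit
  let S := Submodule.span (ZMod p) (Set.range fun g => ρ g v)
  have hS (g : G) : S ≤ S.comap (AddMonoidHom.toZModLinearMap p (ρ g : V →+ V)) := by
    refine Submodule.span_le.2 ?_
    rintro _ ⟨h, rfl⟩
    exact Submodule.subset_span ⟨g * h, by simp⟩
  let _ : MulAction G S :=
    { smul g x := ⟨ρ g x, hS g x.2⟩
      one_smul x := Subtype.ext (show ρ 1 x = x by simp)
      mul_smul g h x := Subtype.ext (show ρ (g * h) x = ρ g (ρ h x) by simp) }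
  have : Module.Finite (ZMod p) S := Module.Finite.span_of_finite _ (Set.finite_range _)
  have : Finite S := Module.finite_of_finite (ZMod p)
  have hvS : v ∈ S := Submodule.subset_span ⟨1, by simp⟩
  have hp : p ∣ Nat.card S := by
    have := addOrderOf_eq_prime (x := (⟨v, hvS⟩ : S)) (Subtype.ext (hpV v)) (by simpa using hv)
    simpa only [this] using addOrderOf_dvd_natCard (⟨v, hvS⟩ : S)
  obtain ⟨w, hw, hw0⟩ := hG.exists_fixed_point_of_prime_dvd_card_of_fixed_point S hp
    (a := 0) fun g => Subtype.ext (map_zero (ρ g))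
  exact ⟨w, fun g => congrArg Subtype.val (hw g), fun h => hw0 (Subtype.ext h.symm)⟩

theorem Representation.invariants_comp_subtype_eq_bot_of_isPGroup_s5 {p : ℕ} [Fact p.Prime]
    {k G V : Type*} [CommRing k] [CharP k p] [Group G] [AddCommGroup V] [Module k V]
    (ρ : Representation k G V) (N : Subgroup G) [N.Normal] [Finite (G ⧸ N)]
    (hN : IsPGroup p (G ⧸ N)) (hρ : ρ.invariants = ⊥) :
    Representation.invariants (ρ.comp N.subtype) = ⊥ := by
  by_contra hne
  have := Submodule.nontrivial_iff_ne_bot.2 hne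
  obtain ⟨⟨w, _⟩, hw, hw0⟩ := hN.exists_mem_invariants_ne_zero (ρ.quotientToInvariants N)
  have hw' : w ∈ ρ.invariants := fun g => congrArg Subtype.val (hw g)
  rw [hρ, Submodule.mem_bot] at hw'
  exact hw0 (Subtype.ext hw')

theorem Representation.exists_eq_apply_sub_of_isUnit_natCard {k G V : Type*} [CommRing k]
    [Group G] [Finite G] [AddCommGroup V] [Module k V] (ρ : Representation k G V)
    (hG : IsUnit (Nat.card G : k)) (f : G → V) (hf : ∀ g h, f (g * h) = ρ g (f h) + f g) :
    ∃ v : V, ∀ g, f g = ρ g v - v := by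
  have := Fintype.ofFinite G
  obtain ⟨u, hu⟩ := hG
  set S := ∑ h, f h
  have hS (g : G) : S = ρ g S + (Nat.card G : k) • f g :=
    calc S = ∑ h, f (g * h) := (Equiv.sum_comp (Equiv.mulLeft g) f).symm
      _ = ρ g S + (Nat.card G : k) • f g := by
        simp [S, hf, Finset.sum_add_distrib, map_sum, Nat.card_eq_fintype_card,
          Nat.cast_smul_eq_nsmul]
  refine ⟨-((u⁻¹ : kˣ) : k) • S, fun g => ?_⟩
  calc f g = ((u⁻¹ : kˣ) : k) • (Nat.card G : k) • f g := by
        rw [← hu, smul_smul, Units.inv_mul, one_smul]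
    _ = _ := by
      rw [eq_sub_of_add_eq' (hS g).symm]
      simp only [neg_smul, map_neg, map_smul, smul_sub]
      abel

theorem Representation.apply_mem_invariants_of_forall_mem_eq_zero {k G V : Type*}
    [CommRing k] [Group G] [AddCommGroup V] [Module k V] (ρ : Representation k G V)
    (N : Subgroup G) [hN : N.Normal] (f : G → V) (hf : ∀ g h, f (g * h) = ρ g (f h) + f g)
    (hfN : ∀ n ∈ N, f n = 0) (g : G) : f g ∈ Representation.invariants (ρ.comp N.subtype) := by
  rintro ⟨n, hn⟩
  have hconj : g⁻¹ * n * g ∈ N := by simpa using hN.conj_mem n hn g⁻¹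
  calc ρ n (f g) = f (n * g) := by rw [hf, hfN n hn, add_zero]
    _ = f (g * (g⁻¹ * n * g)) := by group
    _ = f g := by rw [hf, hfN _ hconj, map_zero, zero_add]

theorem finrank_span_range_le_index {k G M : Type*} [Ring k] [StrongRankCondition k]
    [AddCommGroup M] [Module k M] [Group G] (H : Subgroup G) [H.FiniteIndex] (F : G → M)
    (hF : ∀ g, ∀ h ∈ H, F (g * h) = F g) :
    Module.finrank k (Submodule.span k (Set.range F)) ≤ H.index := by
  have := Fintype.ofFinite (G ⧸ H)
  have hrange : Set.range F ⊆ Set.range fun q : G ⧸ H => F q.out := by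
    rintro _ ⟨g, rfl⟩
    obtain ⟨h, hh⟩ := QuotientGroup.mk_out_eq_mul H g
    exact ⟨g, by simp only [hh, hF g h h.2]⟩
  have : Module.Finite k (Submodule.span k (Set.range fun q : G ⧸ H => F q.out)) :=
    Module.Finite.span_of_finite k (Set.finite_range _)
  calc Module.finrank k (Submodule.span k (Set.range F))
      ≤ Module.finrank k (Submodule.span k (Set.range fun q : G ⧸ H => F q.out)) :=
        Submodule.finrank_mono (Submodule.span_mono hrange)
    _ ≤ Fintype.card (G ⧸ H) := finrank_range_le_card _
    _ = H.index := by rw [H.index_eq_card, Nat.card_eq_fintype_card]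

theorem Rep.eq_bot_or_eq_top_of_le_comap {k G : Type*} [CommRing k] [Monoid G] (V : Rep k G)
    [Simple V] (W : Submodule k V) (hW : ∀ g, W ≤ W.comap (V.ρ g)) : W = ⊥ ∨ W = ⊤ := by
  refine or_iff_not_imp_left.2 fun hW0 => ?_
  let ι : Rep.of (V.ρ.subrepresentation W hW) ⟶ V := Rep.ofHom ⟨W.subtype, fun _ => rfl⟩
  have : Mono ι := (Rep.mono_iff_injective ι).2 Subtype.val_injective
  have hι : ι ≠ 0 := by
    obtain ⟨w, hw, hw0⟩ := Submodule.exists_mem_ne_zero_of_ne_bot hW0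
    intro h
    have hw0' := congrArg (fun f : _ ⟶ V => f.hom (⟨w, hw⟩ : W)) h
    exact hw0 hw0'
  have := isIso_of_mono_of_nonzero hι
  have hsurj := (Rep.epi_iff_surjective ι).1 inferInstance
  exact Submodule.eq_top_iff'.2 fun x => by
    obtain ⟨y, rfl⟩ := hsurj x
    exact y.2

namespace Rep

variable {k G : Type*} [CommRing k] [StrongRankCondition k] [Group G] (V : Rep k G) [Simple V]
  (H : Subgroup G) [H.FiniteIndex]

theorem eq_zero_of_index_lt_finrank (hdim : H.index < Module.finrank k V) (F : G → V)
    (hF : ∀ g, ∀ h ∈ H, F (g * h) = F g)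
    (hstable : ∀ g g', V.ρ g (F g') ∈ Submodule.span k (Set.range F)) : F = 0 := by
  have hspan : Submodule.span k (Set.range F) = ⊥ := by
    refine (V.eq_bot_or_eq_top_of_le_comap _ fun g => Submodule.span_le.2 ?_).resolve_right
      fun htop => ?_
    · rintro _ ⟨g', rfl⟩
      exact hstable g g'
    · have := finrank_span_range_le_index (k := k) H F hF
      rw [htop, finrank_top] at this
      omega
  funext g
  have : F g ∈ Submodule.span k (Set.range F) := Submodule.subset_span ⟨g, rfl⟩
  simpa [hspan] using this

theorem invariants_comp_subtype_eq_bot_of_index_lt_finrank (hdim : H.index < Module.finrank k V) :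
    Representation.invariants (V.ρ.comp H.subtype) = ⊥ := by
  refine (Submodule.eq_bot_iff _).2 fun w hw => ?_
  have := V.eq_zero_of_index_lt_finrank H hdim (fun g => V.ρ g w)
    (fun g h hh => by simpa using congrArg (V.ρ g) (hw ⟨h, hh⟩))
    (fun g g' => Submodule.subset_span ⟨g * g', by simp⟩)
  simpa using congrFun this 1

theorem eq_zero_of_forall_mem_eq_zero (hdim : H.index < Module.finrank k V) (f : G → V)
    (hf : ∀ g h, f (g * h) = V.ρ g (f h) + f g) (hfH : ∀ h ∈ H, f h = 0) : f = 0 :=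
  V.eq_zero_of_index_lt_finrank H hdim f (fun g h hh => by rw [hf, hfH h hh, map_zero, zero_add])
    fun g g' => by
      rw [show V.ρ g (f g') = f (g * g') - f g by rw [hf]; abel]
      exact sub_mem (Submodule.subset_span ⟨_, rfl⟩) (Submodule.subset_span ⟨_, rfl⟩)

theorem exists_eq_apply_sub_of_index_lt_finrank (hdim : H.index < Module.finrank k V)
    (A : Subgroup H) [A.Normal] [Finite A] (hA : IsUnit (Nat.card A : k))
    (hAinv : Representation.invariants ((V.ρ.comp H.subtype).comp A.subtype) = ⊥)
    (f : G → V) (hf : ∀ g h, f (g * h) = V.ρ g (f h) + f g) :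
    ∃ v : V, ∀ g, f g = V.ρ g v - v := by
  obtain ⟨v, hv⟩ := Representation.exists_eq_apply_sub_of_isUnit_natCard
    ((V.ρ.comp H.subtype).comp A.subtype) hA (fun a => f a) fun a b => hf a b
  let F g := f g - (V.ρ g v - v)
  have hF (g h : G) : F (g * h) = V.ρ g (F h) + F g := by
    simp only [F, hf, map_mul, map_sub, Module.End.mul_apply]
    abel
  have hFH (h : G) (hh : h ∈ H) : F h = 0 := by
    have := Representation.apply_mem_invariants_of_forall_mem_eq_zero (V.ρ.comp H.subtype) A
      (fun h => F h) (fun g h => hF g h) (fun a ha => sub_eq_zero.2 (hv ⟨a, ha⟩)) ⟨h, hh⟩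
    simpa [hAinv] using this
  have := V.eq_zero_of_forall_mem_eq_zero H hdim F hF hFH
  exact ⟨v, fun g => sub_eq_zero.1 (congrFun this g)⟩

end Rep

theorem stmt5_general {r : ℕ} [Fact r.Prime] {k G : Type} [Field k] [CharP k r]
    [Group G] [Finite G] (V : Rep k G) [Simple V]
    (H : Subgroup G) (hH : OrEqOr r H)
    (hdim : H.index < Module.finrank k V) :
    Limits.IsZero (groupCohomology V 1) := by
  obtain ⟨A, hA, hAcard, -, ⟨m, hAindex⟩, -⟩ := hH
  have hAunit : IsUnit (Nat.card A : k) := Ne.isUnit ((CharP.cast_eq_zero_iff k r _).not.2 hAcard)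
  have hAinv : Representation.invariants ((V.ρ.comp H.subtype).comp A.subtype) = ⊥ :=
    Representation.invariants_comp_subtype_eq_bot_of_isPGroup_s5 (V.ρ.comp H.subtype) A
      (IsPGroup.of_card (A.index_eq_card ▸ hAindex))
      (V.invariants_comp_subtype_eq_bot_of_index_lt_finrank H hdim)
  have : Subsingleton (groupCohomology.H1 V) := subsingleton_of_forall_eq 0 fun x =>
    groupCohomology.H1_induction_on x fun f => (groupCohomology.H1π_eq_zero_iff f).2 <| by
      obtain ⟨v, hv⟩ := V.exists_eq_apply_sub_of_index_lt_finrank H hdim A hAunit hAinv f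
        ((groupCohomology.mem_cocycles₁_iff f).1 f.2)
      exact ⟨v, funext fun g => (hv g).symm⟩
  exact ModuleCat.isZero_of_subsingleton _

/-- Let `G` be a finite group, `k` an algebraically closed field of
characteristic `r`, and `V` an irreducible `kG`-module. If `dim V > [G : H]` for some
`H ≤ G` with `O_{r'}(H) = O^r(H)`, then `H^1(G, V) = 0`. -/
theorem stmt5 {r : ℕ} [Fact r.Prime] {k G : Type} [Field k] [IsAlgClosed k] [CharP k r]
    [Group G] [Finite G] (V : Rep k G) [Simple V] [FiniteDimensional k V]
    (H : Subgroup G) (hH : OrEqOr r H)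
    (hdim : H.index < Module.finrank k V) :
    Limits.IsZero (groupCohomology V 1) :=
  stmt5_general V H hH hdim
end

section
/- Let p be an odd prime and G = S_p, the symmetric group on p letters, and k an algebraically closed field of characteristic p. Then H^1(G, V) = 0 for every irreducible kG-module V of dimension greater than p. -/
/-!
Averaging a 1-cocycle over a subgroup `H` whose order is invertible in `k` makes it
cohomologous to one vanishing on `H`. Such a cocycle factors through `G ⧸ H`, and since
`ρ g (f h) = f (g h) - f g`, its values span a `G`-stable subspace of dimension at most `[G : H]`.
For the point stabilizer `H ≅ S_{p-1}`, of index `p` and order `(p-1)!` prime to `p`, simplicity of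
`V` and `dim V > p` force this span, hence the cocycle, to vanish.
-/

universe u

open CategoryTheory groupCohomology

lemma Rep.toSubmodule_eq_bot_or_eq_top {k G : Type*} [Field k] [Monoid G] (V : Rep k G) [Simple V]
    (W : Subrepresentation V.ρ) : W.toSubmodule = ⊥ ∨ W.toSubmodule = ⊤ := by
  let ι : Rep.of W.toRepresentation ⟶ V := Rep.ofHom ⟨W.toSubmodule.subtype, fun _ => rfl⟩
  have : Mono ι := (Rep.mono_iff_injective ι).2 Subtype.val_injective
  by_cases hι : ι = 0
  · refine .inl ((Submodule.eq_bot_iff _).2 fun w hw => ?_)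
    exact congr(($hι).hom ⟨w, hw⟩)
  · have : IsIso ι := isIso_of_mono_of_nonzero hι
    refine .inr (LinearMap.range_eq_top.2 ((Rep.epi_iff_surjective ι).1 inferInstance) ▸ ?_)
    exact (Submodule.range_subtype _).symm

namespace groupCohomology

variable {k G : Type u} [Field k] [Group G] {A : Rep k G}

theorem exists_eqOn_d₀₁_of_mem_cocycles₁ {f : G → A} (hf : f ∈ cocycles₁ A) (H : Subgroup G)
    [Finite H] (hH : (Nat.card H : k) ≠ 0) : ∃ v : A, Set.EqOn f ((d₀₁ A).hom v) H := by
  have := Fintype.ofFinite H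
  rw [mem_cocycles₁_iff] at hf
  set S : A := ∑ h : H, f h
  have hS (h₁ : H) : S = A.ρ h₁ S + (Nat.card H : k) • f h₁ := calc
    S = ∑ h : H, f (h₁ * h) := (Fintype.sum_equiv (Equiv.mulLeft h₁) _ _ fun _ => rfl).symm
    _ = A.ρ h₁ S + (Nat.card H : k) • f h₁ := by
      simp only [hf, Finset.sum_add_distrib, map_sum, Finset.sum_const, Finset.card_univ,
        Nat.card_eq_fintype_card, Nat.cast_smul_eq_nsmul, S]
  refine ⟨-(Nat.card H : k)⁻¹ • S, fun h₁ hh₁ => ?_⟩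
  have hf₁ : f h₁ = (Nat.card H : k)⁻¹ • (S - A.ρ h₁ S) := by
    rw [eq_inv_smul_iff₀ hH, eq_sub_iff_add_eq', ← hS ⟨h₁, hh₁⟩]
  rw [d₀₁_hom_apply, map_smul, hf₁]
  module

theorem ρ_apply_eq_sub_of_mem_cocycles₁ {f : G → A} (hf : f ∈ cocycles₁ A) (g h : G) :
    A.ρ g (f h) = f (g * h) - f g := by
  rw [(mem_cocycles₁_iff f).1 hf, add_sub_cancel_right]

def spanRangeOfMemCocycles₁ {f : G → A} (hf : f ∈ cocycles₁ A) : Subrepresentation A.ρ where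
  toSubmodule := Submodule.span k (Set.range f)
  apply_mem_toSubmodule g _ hv := by
    refine (Submodule.span_le (p := (Submodule.span k _).comap (A.ρ g))).2 ?_ hv
    rintro _ ⟨h, rfl⟩
    rw [SetLike.mem_coe, Submodule.mem_comap, ρ_apply_eq_sub_of_mem_cocycles₁ hf]
    exact sub_mem (Submodule.subset_span ⟨_, rfl⟩) (Submodule.subset_span ⟨_, rfl⟩)

theorem finrank_span_range_le_index {f : G → A} (hf : f ∈ cocycles₁ A) (H : Subgroup G)
    [H.FiniteIndex] (hfH : ∀ h ∈ H, f h = 0) :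
    Module.finrank k (Submodule.span k (Set.range f)) ≤ H.index := by
  have := Fintype.ofFinite (G ⧸ H)
  let F : G ⧸ H → A := Quotient.lift f fun a b hab => by
    rw [← mul_inv_cancel_left a b, (mem_cocycles₁_iff f).1 hf,
      hfH _ (QuotientGroup.leftRel_apply.1 hab), map_zero, zero_add]
  have hF : Set.range F = Set.range f := (QuotientGroup.mk_surjective.range_comp F).symm
  rw [Subgroup.index_eq_card, Nat.card_eq_fintype_card, ← hF]
  exact finrank_range_le_card F

theorem eq_zero_of_mem_cocycles₁_of_index_lt [Simple A] {f : G → A} (hf : f ∈ cocycles₁ A)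
    (H : Subgroup G) [H.FiniteIndex] (hA : H.index < Module.finrank k A)
    (hfH : ∀ h ∈ H, f h = 0) : f = 0 := by
  have hspan : Submodule.span k (Set.range f) = ⊥ := by
    refine (A.toSubmodule_eq_bot_or_eq_top (spanRangeOfMemCocycles₁ hf)).resolve_right
      fun htop => ?_
    have hle := finrank_span_range_le_index hf H hfH
    rw [show Submodule.span k (Set.range f) = ⊤ from htop, finrank_top] at hle
    omega
  funext g
  exact (Submodule.mem_bot k).1 (hspan ▸ Submodule.subset_span ⟨g, rfl⟩)

theorem isZero_H1_of_index_lt (A : Rep k G) [Simple A] (H : Subgroup G) [Finite H]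
    [H.FiniteIndex] (hH : (Nat.card H : k) ≠ 0) (hA : H.index < Module.finrank k A) :
    Limits.IsZero (H1 A) := by
  suffices ∀ f : cocycles₁ A, H1π A f = 0 by
    have : Subsingleton (H1 A) := ⟨fun a b =>
      H1_induction_on a fun f => H1_induction_on b fun f' => by rw [this, this]⟩
    exact ModuleCat.isZero_of_subsingleton _
  intro f
  obtain ⟨v, hv⟩ := exists_eqOn_d₀₁_of_mem_cocycles₁ f.2 H hH
  have hf' := eq_zero_of_mem_cocycles₁_of_index_lt (sub_mem f.2 (d₀₁_apply_mem_cocycles₁ v)) H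
    hA fun h hh => sub_eq_zero.2 (hv hh)
  exact (H1π_eq_zero_iff f).2 ⟨v, (sub_eq_zero.1 hf').symm⟩

end groupCohomology

open MulAction in
theorem Equiv.Perm.card_stabilizer {α : Type*} [Finite α] (a : α) :
    Nat.card (stabilizer (Perm α) a) = (Nat.card α - 1).factorial := by
  have hα : Nat.card α ≠ 0 := Nat.card_ne_zero.2 ⟨⟨a⟩, inferInstance⟩
  have h := (stabilizer (Perm α) a).index_mul_card
  rw [index_stabilizer_of_transitive, Nat.card_perm, ← Nat.mul_factorial_pred hα] at h
  exact Nat.eq_of_mul_eq_mul_left (Nat.pos_of_ne_zero hα) h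

theorem stmt12_general (p : ℕ) (hp : p.Prime)
    {k : Type} [Field k] [CharP k p]
    (V : Rep k (Equiv.Perm (Fin p))) [CategoryTheory.Simple V]
    (hdim : p < Module.finrank k V) :
    CategoryTheory.Limits.IsZero (groupCohomology V 1) := by
  let H := MulAction.stabilizer (Equiv.Perm (Fin p)) (⟨0, hp.pos⟩ : Fin p)
  have hindex : H.index = p := by
    rw [MulAction.index_stabilizer_of_transitive, Nat.card_eq_fintype_card, Fintype.card_fin]
  have hcard : (Nat.card H : k) ≠ 0 := by
    rw [Equiv.Perm.card_stabilizer, Nat.card_eq_fintype_card, Fintype.card_fin, Ne,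
      CharP.cast_eq_zero_iff k p, hp.dvd_factorial]
    exact Nat.not_le.2 (Nat.sub_one_lt hp.ne_zero)
  exact isZero_H1_of_index_lt V H hcard (hindex.symm ▸ hdim)

/-- Let `p` be an odd prime, `G = S_p` the symmetric group on `p`
letters, and `k` an algebraically closed field of characteristic `p`. Then
`H^1(G, V) = 0` for every irreducible `kG`-module `V` of dimension greater than `p`. -/
theorem stmt12 (p : ℕ) (hp : p.Prime) (hodd : Odd p)
    {k : Type} [Field k] [IsAlgClosed k] [CharP k p]
    (V : Rep k (Equiv.Perm (Fin p))) [CategoryTheory.Simple V] [FiniteDimensional k V]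
    (hdim : p < Module.finrank k V) :
    CategoryTheory.Limits.IsZero (groupCohomology V 1) :=
  stmt12_general p hp V hdim
end

section
/- Let a_n denote the coefficient of x^n in the power series expansion of P(x) = (1+x^3)/((1−x^2)(1−x^3)). Then a_n = n/3 + 1 if n ≡ 0 mod 3, a_n = ⌊n/3⌋ if n ≡ 1 mod 3, and a_n = ⌈n/3⌉ if n ≡ 2 mod 3. -/
/-!
Peel off one factor of the denominator at a time. Writing `B = P (1 - x³)`, the relation
`B (1 - x²) = 1 + x³` gives `b₀ = 1`, `b₁ = 0` and `bₙ₊₂ = bₙ + [n + 2 = 3]`, so `bₙ = 1` for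
`n ≥ 2`. Then `P (1 - x³) = B` gives `aₙ₊₃ = aₙ + 1` with `a₀ = 1`, `a₁ = 0`, `a₂ = 1`, so
`a₃ₖ = k + 1`, `a₃ₖ₊₁ = k` and `a₃ₖ₊₂ = k + 1`.
-/

open PowerSeries

section OneSubXPow

variable {R : Type*} [Ring R] {f g : R⟦X⟧} {k : ℕ}

theorem coeff_add_eq_of_mul_one_sub_X_pow_eq (hfg : f * (1 - X ^ k) = g) (n : ℕ) :
    coeff (n + k) f = coeff n f + coeff (n + k) g := by
  rw [← hfg, mul_sub, mul_one, map_sub, coeff_mul_X_pow]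
  abel

theorem coeff_eq_of_mul_one_sub_X_pow_eq_of_lt (hfg : f * (1 - X ^ k) = g) {n : ℕ}
    (hn : n < k) : coeff n f = coeff n g := by
  rw [← hfg, mul_sub, mul_one, map_sub, coeff_mul_X_pow', if_neg hn.not_ge, sub_zero]

end OneSubXPow

theorem coeff_of_mul_one_sub_X_sq_eq {B : ℚ⟦X⟧} (hB : B * (1 - X ^ 2) = 1 + X ^ 3) (n : ℕ) :
    coeff n B = if n = 1 then 0 else 1 := by
  have hlow {m : ℕ} (hm : m < 2) := coeff_eq_of_mul_one_sub_X_pow_eq_of_lt hB hm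
  induction n using Nat.twoStepInduction with
  | zero => simp [hlow two_pos]
  | one => simp [hlow one_lt_two, coeff_X_pow]
  | more n ih _ =>
    rw [coeff_add_eq_of_mul_one_sub_X_pow_eq hB, ih]
    simp only [map_add, coeff_one, coeff_X_pow]
    split_ifs <;> first | omega | simp_all

theorem coeff_of_mul_one_sub_X_sq_mul_one_sub_X_cube_eq {P : ℚ⟦X⟧}
    (hP : P * ((1 - X ^ 2) * (1 - X ^ 3)) = 1 + X ^ 3) (k : ℕ) :
    coeff (3 * k) P = k + 1 ∧ coeff (3 * k + 1) P = k ∧ coeff (3 * k + 2) P = k + 1 := by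
  have hB : (P * (1 - X ^ 3)) * (1 - X ^ 2) = 1 + X ^ 3 := by rw [← hP]; ring
  have hBcoeff := coeff_of_mul_one_sub_X_sq_eq hB
  have hstep (m : ℕ) : coeff (m + 3) P = coeff m P + 1 := by
    rw [coeff_add_eq_of_mul_one_sub_X_pow_eq rfl, hBcoeff, if_neg (by omega)]
  have hlow {m : ℕ} (hm : m < 3) : coeff m P = if m = 1 then 0 else 1 :=
    (coeff_eq_of_mul_one_sub_X_pow_eq_of_lt rfl hm).trans (hBcoeff m)
  induction k with
  | zero => simp [hlow]
  | succ k ih =>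
    obtain ⟨h₀, h₁, h₂⟩ := ih
    simp only [mul_add, mul_one, add_right_comm _ 3, hstep, h₀, h₁, h₂]
    push_cast
    exact ⟨by ring, by ring, by ring⟩

/-- Let `a_n` be the coefficient of `x^n` in the power series expansion
of `P(x) = (1+x^3)/((1−x^2)(1−x^3))` (characterised by
`P · (1−x^2)(1−x^3) = 1+x^3`). Then `a_n = n/3 + 1` if `n ≡ 0 mod 3`,
`a_n = ⌊n/3⌋` if `n ≡ 1 mod 3`, and `a_n = ⌈n/3⌉` if `n ≡ 2 mod 3`. -/
theorem stmt13 (P : PowerSeries ℚ)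
    (hP : P * ((1 - PowerSeries.X ^ 2) * (1 - PowerSeries.X ^ 3)) = 1 + PowerSeries.X ^ 3) :
    ∀ n : ℕ,
      (n % 3 = 0 → PowerSeries.coeff n P = (n / 3 : ℕ) + 1) ∧
      (n % 3 = 1 → PowerSeries.coeff n P = ⌊(n : ℚ) / 3⌋) ∧
      (n % 3 = 2 → PowerSeries.coeff n P = ⌈(n : ℚ) / 3⌉) := by
  intro n
  obtain ⟨k, r, hr, rfl⟩ : ∃ k r, r < 3 ∧ n = 3 * k + r :=
    ⟨n / 3, n % 3, Nat.mod_lt n three_pos, (Nat.div_add_mod n 3).symm⟩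
  obtain ⟨h₀, h₁, h₂⟩ := coeff_of_mul_one_sub_X_sq_mul_one_sub_X_cube_eq hP k
  interval_cases r
  · refine ⟨fun _ => ?_, by omega, by omega⟩
    rw [add_zero, h₀, Nat.mul_div_cancel_left k three_pos]
  · refine ⟨by omega, fun _ => ?_, by omega⟩
    have hfloor : ⌊((3 * k + 1 : ℕ) : ℚ) / 3⌋ = k := by
      rw [Int.floor_eq_iff]; push_cast; constructor <;> linarith
    rw [h₁, hfloor, Int.cast_natCast]
  · refine ⟨by omega, by omega, fun _ => ?_⟩
    have hceil : ⌈((3 * k + 2 : ℕ) : ℚ) / 3⌉ = k + 1 := by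
      rw [Int.ceil_eq_iff]; push_cast; constructor <;> linarith
    rw [h₂, hceil]
    norm_cast
end
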